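/- Suppose in addition there is a sequence c̄ : ℕ → ℝ with 0 ≤ c̄(k) and ω_N(k) ≥ ξ·c̄(k) for all k. Then for every k ∈ ℕ: ξ·Σ_{ν ≤ k, ν ∈ N} c̄(ν) ≤ Σ_{ν ≤ k, ν ∈ N} ω_N(ν) ≤ κ_N, where κ_N = κ_gap + (κ_tan/(κ_t·√ς))·log(1 + κ_T²/ς) and κ_T = 2·κ_gap·√ς + (4κ_tan/κ_t)·[log(4κ_tan/(κ_t·√ς)) − 1]. -/

import Mathlib

/-!
Summing the decrease of the merit function ψ, the normal steps contribute `η ∑ ω_N`, the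
first-order tangential terms telescope to at least `η (√(Γ + ς) - √ς)` (because
`α(k) = η / √(Γ(k+1) + ς)`), and the second-order tangential terms to at most
`η² log ((Γ + ς) / ς)`. Since ψ is bounded below, `√(Γ + ς)` is bounded by a constant plus a
multiple of its own logarithm, hence by `κ_T`; feeding this back into the same inequality
bounds `∑ ω_N` by `κ_N`.
-/

open Finset Real

theorem Real.sqrt_sub_sqrt_le_div_sqrt {x y : ℝ} (hx : 0 ≤ x) (hxy : x ≤ y) :
    √y - √x ≤ (y - x) / √y := by
  rcases (sqrt_nonneg y).eq_or_lt with hy | hy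
  · have hx0 : √x = 0 := le_antisymm (hy ▸ sqrt_le_sqrt hxy) (sqrt_nonneg x)
    simp [← hy, hx0]
  · rw [le_div_iff₀ hy]
    nlinarith [mul_le_mul_of_nonneg_left (sqrt_le_sqrt hxy) (sqrt_nonneg x),
      sq_sqrt hx, sq_sqrt (hx.trans hxy)]

theorem Real.sub_div_le_log_sub_log {x y : ℝ} (hx : 0 < x) (hy : 0 < y) :
    (y - x) / y ≤ log y - log x := by
  have h := one_sub_inv_le_log_of_pos (div_pos hy hx)
  rwa [inv_div, log_div hy.ne' hx.ne', one_sub_div hy.ne'] at h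

theorem le_of_le_add_mul_log {x s A B : ℝ} (hx : 0 < x) (hs : 0 < s) (hB : 0 < B)
    (h : x ≤ A + B * log (x / s)) :
    x ≤ 2 * A + 2 * B * (log (2 * B / s) - 1) := by
  have hlog : log (x / s) ≤ x / (2 * B) - 1 + log (2 * B / s) := by
    rw [show x / s = x / (2 * B) * (2 * B / s) by field_simp,
      log_mul (by positivity) (by positivity)]
    linarith [log_le_sub_one_of_pos (show 0 < x / (2 * B) by positivity)]
  have hhalf : B * (x / (2 * B)) = x / 2 := by field_simp
  nlinarith [mul_le_mul_of_nonneg_left hlog hB.le]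

theorem sub_le_sum_range_of_sub_le {f d : ℕ → ℝ} (h : ∀ k, f (k + 1) - f k ≤ d k) (m : ℕ) :
    f m - f 0 ≤ ∑ k ∈ range m, d k := by
  rw [← sum_range_sub]
  exact sum_le_sum fun k _ => h k

theorem sum_range_le_sub_of_le_sub {f d : ℕ → ℝ} (h : ∀ k, d k ≤ f (k + 1) - f k) (m : ℕ) :
    ∑ k ∈ range m, d k ≤ f m - f 0 := by
  rw [← sum_range_sub]
  exact sum_le_sum fun k _ => h k

section Steps

variable {η ς : ℝ} {ωT : ℕ → ℝ} {T : Set ℕ} [DecidablePred (· ∈ T)] {Γ α : ℕ → ℝ}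

theorem accumulated_nonneg (hΓ0 : Γ 0 = 0) (hΓT : ∀ k ∈ T, Γ (k + 1) = Γ k + ωT k ^ 2)
    (hΓN : ∀ k, k ∉ T → Γ (k + 1) = Γ k) (k : ℕ) : 0 ≤ Γ k := by
  induction k with
  | zero => exact hΓ0.ge
  | succ k ih =>
    by_cases hk : k ∈ T
    · rw [hΓT k hk]; positivity
    · rwa [hΓN k hk]

theorem mul_sqrt_succ_sub_le (hη : 0 ≤ η) (hΓT : ∀ k ∈ T, Γ (k + 1) = Γ k + ωT k ^ 2)
    (hΓN : ∀ k, k ∉ T → Γ (k + 1) = Γ k) (hα : ∀ k, α k = η / √(Γ k + ωT k ^ 2 + ς))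
    {k : ℕ} (hk : 0 ≤ Γ k + ς) :
    η * √(Γ (k + 1) + ς) - η * √(Γ k + ς) ≤ if k ∈ T then α k * ωT k ^ 2 else 0 := by
  split_ifs with hT
  · rw [hΓT k hT, hα k, ← mul_sub]
    calc η * (√(Γ k + ωT k ^ 2 + ς) - √(Γ k + ς))
        ≤ η * ((Γ k + ωT k ^ 2 + ς - (Γ k + ς)) / √(Γ k + ωT k ^ 2 + ς)) :=
          mul_le_mul_of_nonneg_left
            (sqrt_sub_sqrt_le_div_sqrt hk (by linarith [sq_nonneg (ωT k)])) hη
      _ = η / √(Γ k + ωT k ^ 2 + ς) * ωT k ^ 2 := by ring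
  · rw [hΓN k hT, sub_self]

theorem sq_mul_sq_le_log_succ_sub (hΓT : ∀ k ∈ T, Γ (k + 1) = Γ k + ωT k ^ 2)
    (hΓN : ∀ k, k ∉ T → Γ (k + 1) = Γ k) (hα : ∀ k, α k = η / √(Γ k + ωT k ^ 2 + ς))
    {k : ℕ} (hk : 0 < Γ k + ς) :
    (if k ∈ T then α k ^ 2 * ωT k ^ 2 else 0)
      ≤ η ^ 2 * log (Γ (k + 1) + ς) - η ^ 2 * log (Γ k + ς) := by
  split_ifs with hT
  · have hk' : 0 < Γ k + ωT k ^ 2 + ς := by linarith [sq_nonneg (ωT k)]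
    rw [hΓT k hT, hα k, div_pow, sq_sqrt hk'.le, ← mul_sub]
    calc η ^ 2 / (Γ k + ωT k ^ 2 + ς) * ωT k ^ 2
        = η ^ 2 * ((Γ k + ωT k ^ 2 + ς - (Γ k + ς)) / (Γ k + ωT k ^ 2 + ς)) := by ring
      _ ≤ η ^ 2 * (log (Γ k + ωT k ^ 2 + ς) - log (Γ k + ς)) :=
          mul_le_mul_of_nonneg_left (sub_div_le_log_sub_log hk hk') (sq_nonneg η)
  · rw [hΓN k hT, sub_self]

end Steps

theorem merit_succ_sub_le {η κt κtan : ℝ} {ωT ωN : ℕ → ℝ} {T N : Set ℕ} [DecidablePred (· ∈ T)]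
    [DecidablePred (· ∈ N)] {α ψ ψp : ℕ → ℝ}
    (hψN : ∀ k ∈ N, ψp k - ψ k ≤ -(η * ωN k)) (hψN' : ∀ k, k ∉ N → ψp k = ψ k)
    (hψT : ∀ k ∈ T, ψ (k + 1) - ψp k ≤ -(κt * α k * ωT k ^ 2) + κtan * α k ^ 2 * ωT k ^ 2)
    (hψT' : ∀ k, k ∉ T → ψ (k + 1) = ψp k) (k : ℕ) :
    ψ (k + 1) - ψ k ≤ κtan * (if k ∈ T then α k ^ 2 * ωT k ^ 2 else 0)
      - κt * (if k ∈ T then α k * ωT k ^ 2 else 0) - η * (if k ∈ N then ωN k else 0) := by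
  have hnormal : ψp k - ψ k ≤ -(η * if k ∈ N then ωN k else 0) := by
    split_ifs with hk
    · exact hψN k hk
    · simp [hψN' k hk]
  have htangential : ψ (k + 1) - ψp k ≤ κtan * (if k ∈ T then α k ^ 2 * ωT k ^ 2 else 0)
      - κt * (if k ∈ T then α k * ωT k ^ 2 else 0) := by
    split_ifs with hk
    · linarith [hψT k hk]
    · simp [hψT' k hk]
  linarith

theorem descent_inequality {η ς κt κtan ψlow : ℝ} (hη : 0 ≤ η) (hς : 0 < ς) (hκt : 0 ≤ κt)
    (hκtan : 0 ≤ κtan) {ωT ωN : ℕ → ℝ} {T N : Set ℕ} [DecidablePred (· ∈ T)]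
    [DecidablePred (· ∈ N)] {Γ α ψ ψp : ℕ → ℝ} (hΓ0 : Γ 0 = 0)
    (hΓT : ∀ k ∈ T, Γ (k + 1) = Γ k + ωT k ^ 2) (hΓN : ∀ k, k ∉ T → Γ (k + 1) = Γ k)
    (hα : ∀ k, α k = η / √(Γ k + ωT k ^ 2 + ς))
    (hψN : ∀ k ∈ N, ψp k - ψ k ≤ -(η * ωN k)) (hψN' : ∀ k, k ∉ N → ψp k = ψ k)
    (hψT : ∀ k ∈ T, ψ (k + 1) - ψp k ≤ -(κt * α k * ωT k ^ 2) + κtan * α k ^ 2 * ωT k ^ 2)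
    (hψT' : ∀ k, k ∉ T → ψ (k + 1) = ψp k) (hlow : ∀ k, ψlow ≤ ψ k) (m : ℕ) :
    η * ∑ ν ∈ (range m).filter (· ∈ N), ωN ν + κt * η * (√(Γ m + ς) - √ς)
      ≤ ψ 0 - ψlow + κtan * η ^ 2 * log ((Γ m + ς) / ς) := by
  have hΓ := accumulated_nonneg hΓ0 hΓT hΓN
  have hmerit := sub_le_sum_range_of_sub_le (merit_succ_sub_le hψN hψN' hψT hψT') m
  have hfirst := sub_le_sum_range_of_sub_le (f := fun k => η * √(Γ k + ς))
    (fun k => mul_sqrt_succ_sub_le hη hΓT hΓN hα (by linarith [hΓ k])) m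
  have hsecond := sum_range_le_sub_of_le_sub (f := fun k => η ^ 2 * log (Γ k + ς))
    (fun k => sq_mul_sq_le_log_succ_sub hΓT hΓN hα (by linarith [hΓ k])) m
  simp only [hΓ0, zero_add, sum_sub_distrib, ← mul_sum] at hmerit hfirst hsecond
  rw [sum_filter, log_div (by linarith [hΓ m]) hς.ne']
  linarith [mul_le_mul_of_nonneg_left hfirst hκt,
    mul_le_mul_of_nonneg_left hsecond hκtan, hlow m]

section Constants

variable {η ς κt κtan D S G : ℝ}

theorem sqrt_le_of_descent (hη : 0 < η) (hη1 : η ≤ 1) (hς : 0 < ς) (hκt : 0 < κt)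
    (hκtan : 0 < κtan) (hκtς : κt * √ς ≤ 1) (hS : 0 ≤ S) (hG : ς ≤ G)
    (h : η * S + κt * η * (√G - √ς) ≤ D + κtan * η ^ 2 * log (G / ς)) :
    √G ≤ 2 * ((1 + D) / (η * κt * √ς)) * √ς
      + 4 * κtan / κt * (log (4 * κtan / (κt * √ς)) - 1) := by
  have hςs : 0 < √ς := sqrt_pos.mpr hς
  have hGs : 0 < √G := sqrt_pos.mpr (hς.trans_le hG)
  have hL : 0 ≤ log (G / ς) := log_nonneg ((one_le_div hς).mpr hG)
  have hlog : log (G / ς) = 2 * log (√G / √ς) := by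
    rw [← sqrt_div' G hς.le, log_sqrt (div_pos (hς.trans_le hG) hς).le]; ring
  have hlin : κt * η * √G ≤ 1 + D + κtan * η * log (G / ς) := by
    have hκtης : κt * η * √ς ≤ 1 := by nlinarith
    nlinarith [mul_le_mul_of_nonneg_left hη1 (mul_nonneg hκtan.le hL)]
  have hself : √G ≤ (1 + D) / (η * κt * √ς) * √ς + 2 * κtan / κt * log (√G / √ς) := by
    have hrhs : (1 + D) / (η * κt * √ς) * √ς + 2 * κtan / κt * log (√G / √ς)
        = (1 + D + κtan * η * log (G / ς)) / (κt * η) := by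
      rw [hlog]; field_simp
    rw [hrhs, le_div_iff₀ (by positivity)]
    linarith
  refine (le_of_le_add_mul_log hGs hςs (by positivity) hself).trans_eq ?_
  rw [show 2 * (2 * κtan / κt) / √ς = 4 * κtan / (κt * √ς) by field_simp; ring]
  ring

theorem sum_le_of_descent {K : ℝ} (hη : 0 < η) (hη1 : η ≤ 1) (hς : 0 < ς) (hκt : 0 < κt)
    (hκtan : 0 < κtan) (hκtς : κt * √ς ≤ 1) (hD : 0 ≤ D) (hG : ς ≤ G) (hGK : √G ≤ K)
    (h : η * S + κt * η * (√G - √ς) ≤ D + κtan * η ^ 2 * log (G / ς)) :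
    S ≤ (1 + D) / (η * κt * √ς) + κtan / (κt * √ς) * log (1 + K ^ 2 / ς) := by
  have hc : 0 < κt * √ς := mul_pos hκt (sqrt_pos.mpr hς)
  have hGK2 : G ≤ K ^ 2 := by
    rw [← sq_sqrt (hς.le.trans hG)]
    exact pow_le_pow_left₀ (sqrt_nonneg G) hGK 2
  have hlog : log (G / ς) ≤ log (1 + K ^ 2 / ς) :=
    log_le_log (div_pos (hς.trans_le hG) hς) (by rw [one_add_div hς.ne']; gcongr; linarith)
  have hL : 0 ≤ log (1 + K ^ 2 / ς) := log_nonneg (by linarith [div_nonneg (sq_nonneg K) hς.le])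
  have hdrop : 0 ≤ κt * η * (√G - √ς) :=
    mul_nonneg (mul_pos hκt hη).le (sub_nonneg.mpr (sqrt_le_sqrt hG))
  have hηc : η * (κt * √ς) ≤ 1 := by nlinarith
  have hrhs : (1 + D) / (η * κt * √ς) + κtan / (κt * √ς) * log (1 + K ^ 2 / ς)
      = (1 + D + κtan * η * log (1 + K ^ 2 / ς)) / (η * (κt * √ς)) := by
    field_simp
  rw [hrhs, le_div_iff₀ (by positivity)]
  nlinarith [mul_le_mul_of_nonneg_left hlog (mul_nonneg hκtan.le (sq_nonneg η)),
    mul_le_mul_of_nonneg_left hηc (mul_nonneg (mul_nonneg hκtan.le hη.le) hL)]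

end Constants

theorem stmt17_general
    (η ς κt κtan ξ : ℝ)
    (hη1 : 0 < η) (hη2 : η ≤ 1) (hς1 : 0 < ς)
    (hκt1 : 0 < κt) (hκtan : 0 < κtan)
    (hκtς : κt * Real.sqrt ς ≤ 1)
    (ωT ωN : ℕ → ℝ) (hωN : ∀ k, 0 ≤ ωN k)
    (T N : Set ℕ) [DecidablePred (· ∈ T)] [DecidablePred (· ∈ N)]
    (Γ α : ℕ → ℝ)
    (hΓ0 : Γ 0 = 0)
    (hΓT : ∀ k ∈ T, Γ (k + 1) = Γ k + ωT k ^ 2)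
    (hΓN : ∀ k, k ∉ T → Γ (k + 1) = Γ k)
    (hα : ∀ k, α k = η / Real.sqrt (Γ k + ωT k ^ 2 + ς))
    (ψ ψp : ℕ → ℝ)
    (hψN : ∀ k ∈ N, ψp k - ψ k ≤ -(η * ωN k))
    (hψN' : ∀ k, k ∉ N → ψp k = ψ k)
    (hψT : ∀ k ∈ T, ψ (k + 1) - ψp k ≤ -(κt * α k * ωT k ^ 2) + κtan * α k ^ 2 * ωT k ^ 2)
    (hψT' : ∀ k, k ∉ T → ψ (k + 1) = ψp k)
    (ψlow : ℝ) (hlow : ∀ k, ψlow ≤ ψ k)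
    (κgap : ℝ) (hκgap : κgap = (1 + ψ 0 - ψlow) / (η * κt * Real.sqrt ς))
    (cbar : ℕ → ℝ) (hcbarN : ∀ k, ξ * cbar k ≤ ωN k)
    (κT κN : ℝ)
    (hκT : κT = 2 * κgap * Real.sqrt ς
      + (4 * κtan / κt) * (Real.log (4 * κtan / (κt * Real.sqrt ς)) - 1))
    (hκN : κN = κgap + (κtan / (κt * Real.sqrt ς)) * Real.log (1 + κT ^ 2 / ς)) :
    ∀ k : ℕ,
      ξ * ∑ ν ∈ (Finset.range (k + 1)).filter (· ∈ N), cbar ν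
          ≤ ∑ ν ∈ (Finset.range (k + 1)).filter (· ∈ N), ωN ν
      ∧ ∑ ν ∈ (Finset.range (k + 1)).filter (· ∈ N), ωN ν ≤ κN := by
  have hςle : ∀ m, ς ≤ Γ m + ς :=
    fun m => le_add_of_nonneg_left (accumulated_nonneg hΓ0 hΓT hΓN m)
  have hdescent := descent_inequality hη1.le hς1 hκt1.le hκtan.le hΓ0 hΓT hΓN hα
    hψN hψN' hψT hψT' hlow
  have hsum_nonneg : ∀ m, 0 ≤ ∑ ν ∈ (range m).filter (· ∈ N), ωN ν :=
    fun m => sum_nonneg fun ν _ => hωN ν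
  have hκgap' : κgap = (1 + (ψ 0 - ψlow)) / (η * κt * √ς) := by rw [hκgap, add_sub_assoc]
  have hsqrt : ∀ m, √(Γ m + ς) ≤ κT := fun m => by
    rw [hκT, hκgap']
    exact sqrt_le_of_descent hη1 hη2 hς1 hκt1 hκtan hκtς (hsum_nonneg m) (hςle m) (hdescent m)
  intro k
  refine ⟨?_, ?_⟩
  · rw [mul_sum]
    exact sum_le_sum fun ν _ => hcbarN ν
  · rw [hκN, hκgap']
    exact sum_le_of_descent hη1 hη2 hς1 hκt1 hκtan hκtς (sub_nonneg.mpr (hlow 0)) (hςle (k + 1))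
      (hsqrt (k + 1)) (hdescent (k + 1))

theorem stmt17
    (η ς β κt κtan ξ : ℝ)
    (hη1 : 0 < η) (hη2 : η ≤ 1) (hς1 : 0 < ς) (hς2 : ς ≤ 1/2) (hβ : 0 < β)
    (hκt1 : 0 < κt) (hκt2 : κt ≤ 1/2) (hκtan : 0 < κtan)
    (hξ1 : 0 < ξ) (hξ2 : ξ ≤ 1)
    (hκtς : κt * Real.sqrt ς ≤ 1)
    (ωT ωN : ℕ → ℝ) (hωT : ∀ k, 0 ≤ ωT k) (hωN : ∀ k, 0 ≤ ωN k)
    (T N : Set ℕ) [DecidablePred (· ∈ T)] [DecidablePred (· ∈ N)]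
    (Γ α : ℕ → ℝ)
    (hΓ0 : Γ 0 = 0)
    (hΓT : ∀ k ∈ T, Γ (k + 1) = Γ k + ωT k ^ 2)
    (hΓN : ∀ k, k ∉ T → Γ (k + 1) = Γ k)
    (hα : ∀ k, α k = η / Real.sqrt (Γ k + ωT k ^ 2 + ς))
    (hswitch : ∀ k, k ∈ T ↔ ωN k ≤ β * α k * ωT k)
    (hTN : ∀ k, k ∉ T → k ∈ N)
    (ψ ψp : ℕ → ℝ)
    (hψN : ∀ k ∈ N, ψp k - ψ k ≤ -(η * ωN k))
    (hψN' : ∀ k, k ∉ N → ψp k = ψ k)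
    (hψT : ∀ k ∈ T, ψ (k + 1) - ψp k ≤ -(κt * α k * ωT k ^ 2) + κtan * α k ^ 2 * ωT k ^ 2)
    (hψT' : ∀ k, k ∉ T → ψ (k + 1) = ψp k)
    (ψlow : ℝ) (hlow : ∀ k, ψlow ≤ ψ k)
    (κgap : ℝ) (hκgap : κgap = (1 + ψ 0 - ψlow) / (η * κt * Real.sqrt ς))
    (cbar : ℕ → ℝ) (hcbar : ∀ k, 0 ≤ cbar k) (hcbarN : ∀ k, ξ * cbar k ≤ ωN k)
    (κT κN : ℝ)
    (hκT : κT = 2 * κgap * Real.sqrt ς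
      + (4 * κtan / κt) * (Real.log (4 * κtan / (κt * Real.sqrt ς)) - 1))
    (hκN : κN = κgap + (κtan / (κt * Real.sqrt ς)) * Real.log (1 + κT ^ 2 / ς)) :
    ∀ k : ℕ,
      ξ * ∑ ν ∈ (Finset.range (k + 1)).filter (· ∈ N), cbar ν
          ≤ ∑ ν ∈ (Finset.range (k + 1)).filter (· ∈ N), ωN ν
      ∧ ∑ ν ∈ (Finset.range (k + 1)).filter (· ∈ N), ωN ν ≤ κN :=
  stmt17_general η ς κt κtan ξ hη1 hη2 hς1 hκt1 hκtan hκtς ωT ωN hωN T N Γ α hΓ0 hΓT hΓN hα ψ ψp hψN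
    hψN' hψT hψT' ψlow hlow κgap hκgap cbar hcbarN κT κN hκT hκN
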